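/- arXiv:1109.3574 — 2 statements merged into one kernel-verified Lean document; each statement's English description precedes it below -/
import Mathlib

section
/- Let n be a 2-step nilpotent real Lie algebra and ω a Lie algebra 2-cocycle on n with trivial real coefficients. Then the function on the BCH group N = (n, *) given by f(X, Y) = ½ω(X,Y) + (1/12)ω(X - Y, [X,Y]) is a group 2-cocycle: f(Y,Z) - f(X*Y, Z) + f(X, Y*Z) - f(X,Y) = 0 for all X, Y, Z. -/
/-!
Write `f = ½ ω + (1/12) g` with `g(U, V) = ω(U - V, [U, V])`. Since `[[n, n], n] = 0`, the
cocycle identity forces `ω([n, n], [n, n]) = 0`, so the group coboundaries of the bilinear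
part and of the cubic part are both multiples of the same trilinear expression
`ω(X, [Y, Z]) - ω([X, Y], Z)`; with the weights `½` and `1/12` they cancel.
-/

/-- The Baker–Campbell–Hausdorff product on a 2-step nilpotent Lie algebra:
`X * Y = X + Y + ½[X,Y]`. -/
noncomputable def bchMul {L : Type*} [LieRing L] [LieAlgebra ℝ L] (X Y : L) : L :=
  X + Y + (2⁻¹ : ℝ) • ⁅X, Y⁆

theorem lie_lie_right_eq_zero {L : Type*} [LieRing L] (h2 : ∀ X Y Z : L, ⁅⁅X, Y⁆, Z⁆ = 0)
    (A B C : L) : ⁅A, ⁅B, C⁆⁆ = 0 := by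
  rw [← lie_skew, h2, neg_zero]

theorem LinearMap.apply_lie_lie_eq_zero {R L M : Type*} [CommRing R] [LieRing L]
    [LieAlgebra R L] [AddCommGroup M] [Module R M] (h2 : ∀ X Y Z : L, ⁅⁅X, Y⁆, Z⁆ = 0)
    {ω : L →ₗ[R] L →ₗ[R] M} (hcoc : ∀ X Y Z : L, ω ⁅X, Y⁆ Z - ω ⁅X, Z⁆ Y + ω ⁅Y, Z⁆ X = 0)
    (A B C D : L) : ω ⁅A, B⁆ ⁅C, D⁆ = 0 := by
  simpa [lie_lie_right_eq_zero h2] using hcoc A B ⁅C, D⁆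

section BCHCoboundary

variable {L : Type*} [LieRing L] [LieAlgebra ℝ L]

noncomputable def bchCoboundary (f : L → L → ℝ) (X Y Z : L) : ℝ :=
  f Y Z - f (bchMul X Y) Z + f X (bchMul Y Z) - f X Y

theorem bchCoboundary_add_mul (a b : ℝ) (f g : L → L → ℝ) (X Y Z : L) :
    bchCoboundary (fun U V => a * f U V + b * g U V) X Y Z =
      a * bchCoboundary f X Y Z + b * bchCoboundary g X Y Z := by
  unfold bchCoboundary
  ring

theorem bchCoboundary_linearMap₂ (ω : L →ₗ[ℝ] L →ₗ[ℝ] ℝ) (X Y Z : L) :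
    bchCoboundary (fun U V => ω U V) X Y Z = 2⁻¹ * (ω X ⁅Y, Z⁆ - ω ⁅X, Y⁆ Z) := by
  simp only [bchCoboundary, bchMul, map_add, map_smul, LinearMap.add_apply,
    LinearMap.smul_apply, smul_eq_mul]
  ring

theorem bchCoboundary_apply_sub_lie (h2 : ∀ X Y Z : L, ⁅⁅X, Y⁆, Z⁆ = 0)
    {ω : L →ₗ[ℝ] L →ₗ[ℝ] ℝ} (hbr : ∀ A B C D : L, ω ⁅A, B⁆ ⁅C, D⁆ = 0) (X Y Z : L) :
    bchCoboundary (fun U V => ω (U - V) ⁅U, V⁆) X Y Z =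
      -(ω X ⁅Y, Z⁆ + 2 * ω Y ⁅X, Z⁆ + ω Z ⁅X, Y⁆) := by
  simp only [bchCoboundary, bchMul, lie_add, add_lie, lie_smul, smul_lie, h2,
    lie_lie_right_eq_zero h2, smul_zero, add_zero, map_add, map_sub, map_smul,
    LinearMap.add_apply, LinearMap.sub_apply, LinearMap.smul_apply, smul_eq_mul, hbr]
  ring

end BCHCoboundary

/-- If `n` is a 2-step nilpotent real Lie algebra and `ω` is a Lie algebra 2-cocycle
on `n` (an alternating bilinear form with `ω([X,Y],Z) - ω([X,Z],Y) + ω([Y,Z],X) = 0`),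
then `f(X,Y) = ½ω(X,Y) + (1/12)ω(X - Y, [X,Y])` is a group 2-cocycle on the BCH group
`N = (n, *)`:  `f(Y,Z) - f(X*Y,Z) + f(X,Y*Z) - f(X,Y) = 0`. -/
theorem integrated_two_cocycle {L : Type*} [LieRing L] [LieAlgebra ℝ L]
    (h2 : ∀ X Y Z : L, ⁅⁅X, Y⁆, Z⁆ = 0)
    (ω : L →ₗ[ℝ] L →ₗ[ℝ] ℝ)
    (halt : ∀ X : L, ω X X = 0)
    (hcoc : ∀ X Y Z : L, ω ⁅X, Y⁆ Z - ω ⁅X, Z⁆ Y + ω ⁅Y, Z⁆ X = 0) :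
    ∀ X Y Z : L,
      (fun U V : L => (2⁻¹ : ℝ) * ω U V + (12⁻¹ : ℝ) * ω (U - V) ⁅U, V⁆) Y Z
      - (fun U V : L => (2⁻¹ : ℝ) * ω U V + (12⁻¹ : ℝ) * ω (U - V) ⁅U, V⁆) (bchMul X Y) Z
      + (fun U V : L => (2⁻¹ : ℝ) * ω U V + (12⁻¹ : ℝ) * ω (U - V) ⁅U, V⁆) X (bchMul Y Z)
      - (fun U V : L => (2⁻¹ : ℝ) * ω U V + (12⁻¹ : ℝ) * ω (U - V) ⁅U, V⁆) X Y = 0 := by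
  intro X Y Z
  have hskew : ∀ A B : L, -ω A B = ω B A := LinearMap.IsAlt.neg (B := ω) halt
  change bchCoboundary (fun U V => 2⁻¹ * ω U V + 12⁻¹ * ω (U - V) ⁅U, V⁆) X Y Z = 0
  rw [bchCoboundary_add_mul, bchCoboundary_linearMap₂,
    bchCoboundary_apply_sub_lie h2 (LinearMap.apply_lie_lie_eq_zero h2 hcoc)]
  linear_combination (-1 / 6 : ℝ) * hcoc X Y Z + (1 / 12 : ℝ) * hskew ⁅X, Y⁆ Z
    + (1 / 6 : ℝ) * hskew ⁅X, Z⁆ Y - (1 / 6 : ℝ) * hskew ⁅Y, Z⁆ X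
end

section
/- Extension of equivariant cocycles to semidirect products: let g and h be Lie algebras with g acting on h by derivations, and let ω be an n-cochain on h with values in a representation R of g ⋉ h. Define the extension ω̃ on g ⋉ h to agree with ω on h and vanish whenever any argument lies in g. Then ω̃ is closed if and only if ω is closed and g-equivariant. -/
/-!
Write `Xᵢ = (xᵢ, aᵢ)`. Since `ω̃` only sees the `h`-components, expanding the brackets
`[Xᵢ, Xⱼ]₂ = xᵢ·aⱼ - xⱼ·aᵢ + [aᵢ, aⱼ]` and the action `Xᵢ· = (xᵢ, 0)· + (0, aᵢ)·` gives
`dω̃(X) = dω(a) + Σᵢ (-1)ⁱ (xᵢ·ω(a₋ᵢ) - Σₖ ω(…, xᵢ·aₖ, …))`, where `a₋ᵢ` omits `aᵢ`: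
the `[aᵢ, aⱼ]`-terms rebuild `dω(a)`, and after moving `xᵢ·aⱼ` to the front, the mixed terms
indexed by pairs `i < j` and by pairs `j < i` together run over all `(i, k)` with
`j = i.succAbove k`. Taking all `xᵢ = 0` shows that `dω̃ = 0` forces `dω = 0`, and then
`X = ((x, 0), (0, a₁), …, (0, aₙ))` isolates the equivariance defect of `ω` at `(x, a)`.
-/

open Finset

/-- The Chevalley–Eilenberg differential of a `p`-cochain (given a bracket `br` on
`L` and an action `π` of `L` on `R`):
`(dω)(X₁,…,X_{p+1}) = Σᵢ (-1)^{i+1} Xᵢ·ω(…,X̂ᵢ,…)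
   + Σ_{i<j} (-1)^{i+j} ω([Xᵢ,Xⱼ],…,X̂ᵢ,…,X̂ⱼ,…)`. -/
def ceD {L R : Type*} [AddCommGroup R] (br : L → L → L) (π : L → R → R) :
    ∀ {p : ℕ}, ((Fin p → L) → R) → (Fin (p + 1) → L) → R
  | 0, ω => fun X => π (X 0) (ω Fin.elim0)
  | (m + 1), ω => fun X =>
      (∑ i : Fin (m + 2), ((-1 : ℤ) ^ (i : ℕ)) • π (X i) (ω (X ∘ i.succAbove)))
        + ∑ i : Fin (m + 2), ∑ j : Fin (m + 2),
            if hij : (i : ℕ) < (j : ℕ) then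
              ((-1 : ℤ) ^ ((i : ℕ) + (j : ℕ))) •
                ω (Fin.cons (br (X i) (X j))
                    ((X ∘ j.succAbove) ∘
                      (Fin.succAbove
                        ⟨(i : ℕ), lt_of_lt_of_le hij (Nat.lt_succ_iff.mp j.isLt)⟩)))
            else 0

open Function

theorem LinearMap.apply_prod_eq_add {K M N P : Type*} [Semiring K] [AddCommMonoid M]
    [AddCommMonoid N] [AddCommMonoid P] [Module K M] [Module K N] [Module K P]
    (f : (M × N) →ₗ[K] P) (X : M × N) : f X = f (X.1, 0) + f (0, X.2) := by
  rw [← map_add, Prod.mk_add_mk, add_zero, zero_add]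

theorem AlternatingMap.map_update_eq_neg_one_pow_smul_cons {K M N : Type*} [CommRing K]
    [AddCommGroup M] [Module K M] [AddCommGroup N] [Module K N] {n : ℕ}
    (ω : AlternatingMap K M N (Fin (n + 1))) (b : Fin (n + 1) → M) (k : Fin (n + 1)) (c : M) :
    ω (update b k c) = (-1 : ℤ) ^ (k : ℕ) • ω (Fin.cons c (b ∘ k.succAbove)) := by
  rw [← Fin.insertNth_removeNth, AlternatingMap.map_insertNth]
  rfl

theorem Fin.sum_dite_lt_sub_sum_dite_gt {α M : Type*} [AddCommGroup M] {m : ℕ}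
    (f : Fin (m + 2) → (Fin m → α) → M) (a : Fin (m + 2) → α) (i : Fin (m + 2)) :
    ((∑ j : Fin (m + 2), if hij : (i : ℕ) < (j : ℕ) then
        (-1 : ℤ) ^ ((i : ℕ) + (j : ℕ)) • f j ((a ∘ j.succAbove) ∘
          Fin.succAbove ⟨(i : ℕ), lt_of_lt_of_le hij (Nat.lt_succ_iff.mp j.isLt)⟩) else 0)
      - ∑ j : Fin (m + 2), if hji : (j : ℕ) < (i : ℕ) then
        (-1 : ℤ) ^ ((j : ℕ) + (i : ℕ)) • f j ((a ∘ i.succAbove) ∘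
          Fin.succAbove ⟨(j : ℕ), lt_of_lt_of_le hji (Nat.lt_succ_iff.mp i.isLt)⟩) else 0)
    = -∑ k : Fin (m + 1),
        (-1 : ℤ) ^ ((i : ℕ) + (k : ℕ)) • f (i.succAbove k) ((a ∘ i.succAbove) ∘ k.succAbove) := by
  rw [Fin.sum_univ_succAbove _ i, Fin.sum_univ_succAbove _ i, dif_neg (lt_irrefl _), zero_add,
    zero_add, ← sum_sub_distrib, ← sum_neg_distrib]
  refine sum_congr rfl fun k _ => ?_
  rcases lt_or_ge (k : ℕ) (i : ℕ) with hki | hik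
  · have hk : i.succAbove k = k.castSucc := Fin.succAbove_of_castSucc_lt _ _ hki
    have hpos : ((i.succAbove k : Fin (m + 2)) : ℕ) < i := by simpa [hk] using hki
    rw [dif_neg (by omega), dif_pos hpos, zero_sub]
    simp only [hk, Fin.val_castSucc, Fin.eta, add_comm (k : ℕ)]
  · have hk : i.succAbove k = k.succ := Fin.succAbove_of_le_castSucc _ _ hik
    have hpos : (i : ℕ) < ((i.succAbove k : Fin (m + 2)) : ℕ) := by
      simp only [hk, Fin.val_succ]; omega
    have hpred : (⟨(i : ℕ), by omega⟩ : Fin (m + 1)) = k.predAbove i := by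
      ext; simp [Fin.predAbove_of_le_castSucc _ _ hik]
    rw [dif_pos hpos, dif_neg (by omega), sub_zero]
    have hrest : (a ∘ (i.succAbove k).succAbove) ∘ (⟨(i : ℕ), by omega⟩ : Fin (m + 1)).succAbove
        = (a ∘ i.succAbove) ∘ k.succAbove := by
      rw [hpred]
      exact funext fun t => congrArg a (Fin.succAbove_succAbove_succAbove_predAbove i k t)
    rw [hrest]
    simp only [hk, Fin.val_succ, ← add_assoc, pow_succ, mul_neg_one, neg_smul]

theorem Fin.sum_sum_dite_lt_smul_sub_swap {α M : Type*} [AddCommGroup M] {m : ℕ}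
    (F : Fin (m + 2) → Fin (m + 2) → (Fin m → α) → M) (a : Fin (m + 2) → α) :
    ∑ i : Fin (m + 2), ∑ j : Fin (m + 2), (if hij : (i : ℕ) < (j : ℕ) then
        (-1 : ℤ) ^ ((i : ℕ) + (j : ℕ)) •
          (F i j ((a ∘ j.succAbove) ∘
            Fin.succAbove ⟨(i : ℕ), lt_of_lt_of_le hij (Nat.lt_succ_iff.mp j.isLt)⟩)
          - F j i ((a ∘ j.succAbove) ∘
            Fin.succAbove ⟨(i : ℕ), lt_of_lt_of_le hij (Nat.lt_succ_iff.mp j.isLt)⟩)) else 0)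
    = -∑ i : Fin (m + 2), ∑ k : Fin (m + 1),
        (-1 : ℤ) ^ ((i : ℕ) + (k : ℕ)) • F i (i.succAbove k) ((a ∘ i.succAbove) ∘ k.succAbove) := by
  have hsplit : ∀ (P : Prop) [Decidable P] (A B : P → M),
      (if h : P then A h - B h else 0) = (if h : P then A h else 0) - (if h : P then B h else 0) :=
    fun P _ A B => by split <;> simp
  simp only [smul_sub, hsplit, sum_sub_distrib]
  nth_rw 2 [sum_comm]
  rw [← sum_sub_distrib, ← sum_neg_distrib]
  exact sum_congr rfl fun i _ => Fin.sum_dite_lt_sub_sum_dite_gt (F i) a i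

section Semidirect

variable {K g h R : Type*} [CommRing K] [LieRing g] [Module K g] [LieRing h] [Module K h]
  [AddCommGroup R] [Module K R] (ρ : g →ₗ[K] h →ₗ[K] h) (π : (g × h) →ₗ[K] R →ₗ[K] R)

/-- Reducible, so that rewriting with lemmas about it also matches the bracket written out as a
`fun`. -/
abbrev semidirectBracket (X Y : g × h) : g × h :=
  (⁅X.1, Y.1⁆, ρ X.1 Y.2 - ρ Y.1 X.2 + ⁅X.2, Y.2⁆)

def equivarianceDefect {n : ℕ} (ω : AlternatingMap K h R (Fin n)) (x : g) (b : Fin n → h) : R :=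
  π (x, 0) (ω b) - ∑ k, ω (update b k (ρ x (b k)))

theorem equivarianceDefect_zero {n : ℕ} (ω : AlternatingMap K h R (Fin n)) (b : Fin n → h) :
    equivarianceDefect ρ π ω 0 b = 0 := by
  simp [equivarianceDefect, Prod.mk_zero_zero]

theorem equivarianceDefect_eq_zero_iff {n : ℕ} (ω : AlternatingMap K h R (Fin n)) (x : g)
    (b : Fin n → h) :
    equivarianceDefect ρ π ω x b = 0 ↔ π (x, 0) (ω b) = ∑ k, ω (update b k (ρ x (b k))) :=
  sub_eq_zero

theorem compLinearMap_snd_cons_semidirectBracket {m : ℕ} (ω : AlternatingMap K h R (Fin (m + 1)))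
    (X Y : g × h) (v : Fin m → g × h) :
    ω.compLinearMap (LinearMap.snd K g h) (Fin.cons (semidirectBracket ρ X Y) v)
      = ω (Fin.cons (ρ X.1 Y.2) (Prod.snd ∘ v)) - ω (Fin.cons (ρ Y.1 X.2) (Prod.snd ∘ v))
        + ω (Fin.cons ⁅X.2, Y.2⁆ (Prod.snd ∘ v)) := by
  have hcurry : ∀ c : h, ω (Fin.cons c (Prod.snd ∘ v)) = ω.curryLeft c (Prod.snd ∘ v) :=
    fun _ => rfl
  change ω (Prod.snd ∘ Fin.cons (semidirectBracket ρ X Y) v) = _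
  rw [Fin.comp_cons, hcurry, hcurry, hcurry, hcurry, map_add, map_sub]
  rfl

theorem ceD_compLinearMap_snd {n : ℕ} (ω : AlternatingMap K h R (Fin n))
    (X : Fin (n + 1) → g × h) :
    ceD (semidirectBracket ρ) (fun Z r => π Z r) (ω.compLinearMap (LinearMap.snd K g h)) X
      = ceD (fun a b : h => ⁅a, b⁆) (fun a r => π (0, a) r) ω (Prod.snd ∘ X)
        + ∑ i : Fin (n + 1), (-1 : ℤ) ^ (i : ℕ) •
            equivarianceDefect ρ π ω (X i).1 ((Prod.snd ∘ X) ∘ i.succAbove) := by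
  cases n with
  | zero =>
    have eq_elim0 : ∀ v : Fin 0 → h, ω v = ω Fin.elim0 :=
      fun v => congrArg ω (Subsingleton.elim _ _)
    simp only [ceD, AlternatingMap.compLinearMap_apply, eq_elim0,
      LinearMap.apply_prod_eq_add π (X 0), LinearMap.add_apply, equivarianceDefect, univ_eq_empty,
      sum_empty, sub_zero, Fin.sum_univ_succ, Fin.val_zero, pow_zero, one_smul, add_zero,
      Function.comp_apply]
    exact add_comm _ _
  | succ m =>
    have hsnd : ∀ v, ω.compLinearMap (LinearMap.snd K g h) v = ω (Prod.snd ∘ v) := fun _ => rfl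
    have hsplit : ∀ (P : Prop) [Decidable P] (A B : P → R),
        (if h : P then A h + B h else 0)
          = (if h : P then A h else 0) + (if h : P then B h else 0) :=
      fun P _ A B => by split <;> simp
    have pairs := Fin.sum_sum_dite_lt_smul_sub_swap
      (fun i j r => ω (Fin.cons (ρ (X i).1 (X j).2) r)) (Prod.snd ∘ X)
    beta_reduce at pairs
    simp only [ceD, compLinearMap_snd_cons_semidirectBracket]
    simp only [hsnd, ← Function.comp_assoc, LinearMap.apply_prod_eq_add π (X _),
      LinearMap.add_apply, smul_add, hsplit, sum_add_distrib]
    rw [pairs]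
    simp only [equivarianceDefect, Function.comp_apply,
      AlternatingMap.map_update_eq_neg_one_pow_smul_cons, smul_sub, smul_sum, smul_smul, ← pow_add,
      sum_sub_distrib]
    abel

end Semidirect

theorem extension_closed_iff_closed_and_equivariant_general
    {g h R : Type*} [LieRing g] [LieAlgebra ℝ g] [LieRing h] [LieAlgebra ℝ h]
    [AddCommGroup R] [Module ℝ R]
    (ρ : g →ₗ[ℝ] h →ₗ[ℝ] h)
    (π : (g × h) →ₗ[ℝ] R →ₗ[ℝ] R)
    (n : ℕ) (ω : AlternatingMap ℝ h R (Fin n)) :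
    (∀ X : Fin (n + 1) → g × h,
        ceD (fun X Y : g × h => (⁅X.1, Y.1⁆, ρ X.1 Y.2 - ρ Y.1 X.2 + ⁅X.2, Y.2⁆))
          (fun (Z : g × h) (r : R) => π Z r)
          (⇑(ω.compLinearMap (LinearMap.snd ℝ g h))) X = 0)
    ↔ ((∀ a : Fin (n + 1) → h,
          ceD (fun a b : h => ⁅a, b⁆) (fun (a : h) (r : R) => π (0, a) r) (⇑ω) a = 0)
        ∧ (∀ (x : g) (a : Fin n → h),
            π (x, 0) (ω a) = ∑ i : Fin n, ω (Function.update a i (ρ x (a i))))) := by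
  simp only [ceD_compLinearMap_snd ρ π, ← equivarianceDefect_eq_zero_iff ρ π]
  constructor
  · intro H
    have closed : ∀ a : Fin (n + 1) → h,
        ceD (fun a b : h => ⁅a, b⁆) (fun (a : h) (r : R) => π (0, a) r) (⇑ω) a = 0 := fun a => by
      simpa [Function.comp_def, equivarianceDefect_zero] using H fun i => (0, a i)
    refine ⟨closed, fun x a => ?_⟩
    simpa [Fin.comp_cons, Function.comp_def, closed, Fin.sum_univ_succ, equivarianceDefect_zero]
      using H (Fin.cons (x, 0) fun k => (0, a k))
  · rintro ⟨closed, equivariant⟩ X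
    rw [closed, zero_add]
    exact sum_eq_zero fun i _ => by rw [equivariant, smul_zero]

/-- Extension of equivariant cocycles to semidirect products.  Let `g` act on the
Lie algebra `h` by derivations (forming `g ⋉ h` with bracket
`[(x,a),(y,b)] = ([x,y], x·b - y·a + [a,b])`) and let `R` be a representation of
`g ⋉ h`.  Given an `R`-valued alternating `n`-cochain `ω` on `h`, its extension
`ω̃ = ω ∘ pr₂` to `g ⋉ h` agrees with `ω` on `h` and vanishes whenever any argument
lies in `g`.  Then `ω̃` is closed if and only if `ω` is closed and `g`-equivariant. -/
theorem extension_closed_iff_closed_and_equivariant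
    {g h R : Type*} [LieRing g] [LieAlgebra ℝ g] [LieRing h] [LieAlgebra ℝ h]
    [AddCommGroup R] [Module ℝ R]
    (ρ : g →ₗ[ℝ] h →ₗ[ℝ] h)
    (hρ_rep : ∀ (x y : g) (a : h), ρ ⁅x, y⁆ a = ρ x (ρ y a) - ρ y (ρ x a))
    (hρ_der : ∀ (x : g) (a b : h), ρ x ⁅a, b⁆ = ⁅ρ x a, b⁆ + ⁅a, ρ x b⁆)
    (π : (g × h) →ₗ[ℝ] R →ₗ[ℝ] R)
    (hπ_rep : ∀ (X Y : g × h) (r : R),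
      π (⁅X.1, Y.1⁆, ρ X.1 Y.2 - ρ Y.1 X.2 + ⁅X.2, Y.2⁆) r
        = π X (π Y r) - π Y (π X r))
    (n : ℕ) (ω : AlternatingMap ℝ h R (Fin n)) :
    (∀ X : Fin (n + 1) → g × h,
        ceD (fun X Y : g × h => (⁅X.1, Y.1⁆, ρ X.1 Y.2 - ρ Y.1 X.2 + ⁅X.2, Y.2⁆))
          (fun (Z : g × h) (r : R) => π Z r)
          (⇑(ω.compLinearMap (LinearMap.snd ℝ g h))) X = 0)
    ↔ ((∀ a : Fin (n + 1) → h,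
          ceD (fun a b : h => ⁅a, b⁆) (fun (a : h) (r : R) => π (0, a) r) (⇑ω) a = 0)
        ∧ (∀ (x : g) (a : Fin n → h),
            π (x, 0) (ω a) = ∑ i : Fin n, ω (Function.update a i (ρ x (a i))))) :=
  extension_closed_iff_closed_and_equivariant_general ρ π n ω
end
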